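/- Let s be a positive integer, let r_1, …, r_s be positive integers, and let n_1 < n_2 < ⋯ < n_s be real numbers with n_1 ≥ 0 and, in case s ≥ 2, n_{s-1} ≤ n_s − 1. Set f(x) = (x − n_1)^{r_1} ⋯ (x − n_s)^{r_s}, and let x_0 be the unique real root of f(x) − 1 in (n_s, n_s + 1]. Then every complex number z with f(z) = 1 satisfies |z| ≤ x_0. Consequently ρ(f(x) − 1) = x_0, i.e. the maximum modulus of the complex roots of f(x) − 1 equals x_0. -/

import Mathlib

open Polynomial

/-- `rho p` is the maximum (supremum) of the moduli of the complex roots of the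
real polynomial `p`. -/
noncomputable def rho (p : Polynomial ℝ) : ℝ :=
  sSup {t : ℝ | ∃ z : ℂ, (Polynomial.aeval z) p = 0 ∧ ‖z‖ = t}

/-!
All roots `aᵢ` of `f = ∏ (X - aᵢ)^{rᵢ}` lie in `[0, x₀)`, so for `‖z‖ > x₀` each factor satisfies
`‖z - aᵢ‖ ≥ ‖z‖ - aᵢ > x₀ - aᵢ > 0`; hence `‖f z‖ > f x₀ = 1` and `z` is not a root of `f - 1`.
Since `x₀` itself is a root, it is the largest modulus of a root.
-/

theorem Complex.sub_lt_norm_sub_ofReal {z : ℂ} {a x : ℝ} (ha : 0 ≤ a) (hz : x < ‖z‖) :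
    x - a < ‖z - a‖ :=
  calc x - a < ‖z‖ - ‖(a : ℂ)‖ := by rw [Complex.norm_of_nonneg ha]; linarith
    _ ≤ ‖z - a‖ := norm_sub_norm_le _ _

theorem prod_sub_pow_lt_norm_prod_sub_pow {ι : Type*} [Fintype ι] [Nonempty ι]
    {a : ι → ℝ} {r : ι → ℕ} (ha : ∀ i, 0 ≤ a i) (hr : ∀ i, 0 < r i)
    {x : ℝ} (hx : ∀ i, a i < x) {z : ℂ} (hz : x < ‖z‖) :
    ∏ i, (x - a i) ^ r i < ‖∏ i, (z - a i) ^ r i‖ := by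
  rw [norm_prod]
  refine Finset.prod_lt_prod_of_nonempty (fun i _ => pow_pos (sub_pos.2 (hx i)) _)
    (fun i _ => ?_) Finset.univ_nonempty
  rw [norm_pow]
  exact pow_lt_pow_left₀ (Complex.sub_lt_norm_sub_ofReal (ha i) hz) (sub_pos.2 (hx i)).le
    (hr i).ne'

theorem norm_le_of_prod_sub_pow_eq {ι : Type*} [Fintype ι] [Nonempty ι]
    {a : ι → ℝ} {r : ι → ℕ} (ha : ∀ i, 0 ≤ a i) (hr : ∀ i, 0 < r i)
    {x : ℝ} (hx : ∀ i, a i < x) {z : ℂ}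
    (hz : ∏ i, (z - a i) ^ r i = ((∏ i, (x - a i) ^ r i : ℝ) : ℂ)) : ‖z‖ ≤ x := by
  by_contra! hlt
  have hpos : 0 ≤ ∏ i, (x - a i) ^ r i :=
    Finset.prod_nonneg fun i _ => pow_nonneg (sub_pos.2 (hx i)).le _
  have := prod_sub_pow_lt_norm_prod_sub_pow ha hr hx hlt
  rw [hz, Complex.norm_real, Real.norm_of_nonneg hpos] at this
  exact this.false

theorem rho_eq_of_isRoot {p : ℝ[X]} {x : ℝ} (hx : 0 ≤ x) (hroot : aeval (x : ℂ) p = 0)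
    (hle : ∀ z : ℂ, aeval z p = 0 → ‖z‖ ≤ x) : rho p = x := by
  refine IsGreatest.csSup_eq ⟨⟨x, hroot, Complex.norm_of_nonneg hx⟩, ?_⟩
  rintro t ⟨z, hz, rfl⟩
  exact hle z hz

theorem aeval_prod_X_sub_C_pow_sub_one {ι : Type*} [Fintype ι] (a : ι → ℝ) (r : ι → ℕ)
    (z : ℂ) : aeval z (∏ i, (X - C (a i)) ^ r i - 1) = ∏ i, (z - a i) ^ r i - 1 := by
  simp [map_prod]

/-- With `f(x) = (x - n₁)^{r₁} ⋯ (x - n_s)^{r_s}` as before and `x₀`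
the unique real root of `f(x) - 1` in `(n_s, n_s + 1]`, every complex `z` with
`f(z) = 1` satisfies `|z| ≤ x₀`; consequently `ρ(f - 1) = x₀`. -/
theorem statement1 (s : ℕ) (hs : 0 < s) (r : Fin s → ℕ) (hr : ∀ i, 0 < r i)
    (n : Fin s → ℝ) (hmono : StrictMono n) (hn0 : 0 ≤ n ⟨0, hs⟩)
    (x₀ : ℝ) (hx₀ : x₀ ∈ Set.Ioc (n ⟨s - 1, by omega⟩) (n ⟨s - 1, by omega⟩ + 1))
    (hroot : ∏ i : Fin s, (x₀ - n i) ^ r i = 1) :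
    (∀ z : ℂ, ∏ i : Fin s, (z - (n i : ℂ)) ^ r i = 1 → ‖z‖ ≤ x₀) ∧
      rho (∏ i : Fin s, (X - C (n i)) ^ r i - 1) = x₀ := by
  have : Nonempty (Fin s) := ⟨⟨0, hs⟩⟩
  have hn_nonneg : ∀ i, 0 ≤ n i := fun i =>
    hn0.trans (hmono.monotone (Fin.le_def.2 (Nat.zero_le _)))
  have hn_lt : ∀ i, n i < x₀ := fun i =>
    (hmono.monotone (Fin.le_def.2 (by simp only; omega))).trans_lt hx₀.1
  have hbound : ∀ z : ℂ, ∏ i : Fin s, (z - (n i : ℂ)) ^ r i = 1 → ‖z‖ ≤ x₀ := fun z hz =>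
    norm_le_of_prod_sub_pow_eq hn_nonneg hr hn_lt (by rw [hz, hroot, Complex.ofReal_one])
  refine ⟨hbound, rho_eq_of_isRoot ((hn_nonneg _).trans (hn_lt ⟨0, hs⟩).le) ?_ ?_⟩
  · rw [aeval_prod_X_sub_C_pow_sub_one, sub_eq_zero]
    exact_mod_cast hroot
  · intro z hz
    rw [aeval_prod_X_sub_C_pow_sub_one, sub_eq_zero] at hz
    exact hbound z hz
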